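/- Fix k_0 and define Φ : Z_{s,n} → binom([sn], s−1) by Φ(μ) = φ^{(k_0)}(μ) if μ_{k_0} > 0 or μ ∉ R^{(k_0)}, and Φ(μ_0^{(l)}) = {(i−1)n+1 : i ≠ k_0, l} ⊔ {(k_0−1)n+2} for l ≠ k_0, where R^{(k_0)} = {μ_0^{(l)} : l ≠ k_0} and μ_0^{(l)} has n in position l. Then for all λ, μ ∈ Z_{s,n}, ⟨V_{ι(λ)}(A), V̄_{Φ(μ)}(A)⟩ = 0 unless λ ⪯_{k_0} μ. -/

import Mathlib

open Finset

/-- The minor of `A` on the rows `I` and columns `J` (listed increasingly);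
junk value `0` if `I` and `J` have different sizes. -/
def minor {R : Type*} [CommRing R] {N M : ℕ} (A : Matrix (Fin N) (Fin M) R)
    (I : Finset (Fin N)) (J : Finset (Fin M)) : R :=
  if h : J.card = I.card then
    (A.submatrix (I.orderEmbOfFin rfl) (J.orderEmbOfFin h)).det
  else 0

/-- `ι(μ) = ⊔_i {(i−1)n+1, …, (i−1)n+μ_i} ⊆ [sn]` (here `0`-based). -/
def iotaSet (s n : ℕ) (μ : Fin s → ℕ) : Finset (Fin (s * n)) :=
  Finset.univ.filter fun x =>
    (x : ℕ) % n < if h : (x : ℕ) / n < s then μ ⟨(x : ℕ) / n, h⟩ else 0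

/-- `φ^{(k)}(μ) = {(i−1)n + μ_i + 1 : i ≠ k} ⊆ [sn]` (here `0`-based). -/
def phiSet (s n : ℕ) (k : Fin s) (μ : Fin s → ℕ) : Finset (Fin (s * n)) :=
  Finset.univ.filter fun x =>
    (x : ℕ) / n ≠ (k : ℕ) ∧
      ((x : ℕ) % n) = (if h : (x : ℕ) / n < s then μ ⟨(x : ℕ) / n, h⟩ else n)

/-- `ε(J,K)`: the sign of the permutation sorting the concatenation of `J` and
`K`, and `0` if `J ∩ K ≠ ∅`. -/
def eps {α : Type*} [LinearOrder α] (J K : Finset α) : ℤ :=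
  if Disjoint J K then (-1) ^ ((J ×ˢ K).filter fun p => p.2 < p.1).card else 0

/-- The sign `(−1)^{|I| − n(n+1)/2}` (written with the same parity as
`|I| + n(n+1)/2`, where `|I|` is the sum of the (1-based) elements of `I`). -/
def vSign {N : ℕ} (n : ℕ) (I : Finset (Fin N)) : ℤ :=
  (-1) ^ ((∑ i ∈ I, ((i : ℕ) + 1)) + n * (n + 1) / 2)

/-- The inner product `⟨V_J(A), V̄_K(A)⟩ = ∑_{I ∈ ([s+n−1] choose n)}
(det A^I_J) · (−1)^{|I|−n(n+1)/2} (det A^{Ī}_K)`. -/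
noncomputable def innerVV {R : Type*} [CommRing R] {s n : ℕ}
    (A : Matrix (Fin (s + n - 1)) (Fin (s * n)) R)
    (J K : Finset (Fin (s * n))) : R :=
  ∑ I : {I : Finset (Fin (s + n - 1)) // I.card = n},
    minor A I.1 J * (((vSign n I.1 : ℤ) : R) * minor A (I.1)ᶜ K)

/-- The replacement value `Φ(μ_0^{(l)}) = ⊔_{i ≠ k0, l} {(i−1)n+1} ⊔ {(k0−1)n+2}`
(here `0`-based: `{ i·n : i ≠ k0, l } ∪ { k0·n + 1 }`). -/
def specialSet (s n : ℕ) (k0 l : Fin s) : Finset (Fin (s * n)) :=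
  Finset.univ.filter fun x =>
    ((x : ℕ) % n = 0 ∧ (x : ℕ) / n ≠ (k0 : ℕ) ∧ (x : ℕ) / n ≠ (l : ℕ)) ∨
      (x : ℕ) = (k0 : ℕ) * n + 1

/-!
Suppose `λ ⋠_{k0} μ` and pick `i ≠ k0` with `μ_i < λ_i`. Position `μ_i + 1` of block `i` lies in
`ι(λ)` and in `Φ(μ)`: for `μ = μ_0^{(l)}` one has `i ≠ l` and `μ_i = 0`, and the first position
of block `i` belongs to the special set. So it suffices that `⟨V_J, V̄_K⟩ = 0` whenever `J` and
`K` meet. By the generalized Laplace expansion along the first `n` columns, `⟨V_J, V̄_K⟩` is the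
determinant of the square matrix `[A_J | A_K]`, which has a repeated column. The sign
`(−1)^{|I| − n(n+1)/2}` of the shuffle listing `I` before `Iᶜ` is found by moving `I` down to
`{1, …, n}` through adjacent transpositions, each of which lowers `|I|` by one.
-/

open Equiv

section Shuffle

variable {N n : ℕ}

lemma card_compl_eq_sub {I : Finset (Fin N)} (hI : I.card = n) : Iᶜ.card = N - n := by
  rw [card_compl, hI, Fintype.card_fin]

def shuffleEquiv (I : Finset (Fin N)) (hI : I.card = n) : Fin n ⊕ Fin (N - n) ≃ Fin N :=
  (Equiv.sumCongr (I.orderIsoOfFin hI).toEquiv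
      ((Iᶜ.orderIsoOfFin (card_compl_eq_sub hI)).toEquiv.trans
        (Equiv.subtypeEquivRight fun _ => mem_compl))).trans
    (Equiv.sumCompl (· ∈ I))

@[simp]
lemma shuffleEquiv_inl (I : Finset (Fin N)) (hI : I.card = n) (j : Fin n) :
    shuffleEquiv I hI (Sum.inl j) = I.orderEmbOfFin hI j := by
  simp [shuffleEquiv]

@[simp]
lemma shuffleEquiv_inr (I : Finset (Fin N)) (hI : I.card = n) (j : Fin (N - n)) :
    shuffleEquiv I hI (Sum.inr j) = Iᶜ.orderEmbOfFin (card_compl_eq_sub hI) j := by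
  simp [shuffleEquiv]

def lowSet (hn : n ≤ N) : Finset (Fin N) := univ.map (Fin.castLEEmb hn)

lemma mem_lowSet (hn : n ≤ N) {x : Fin N} : x ∈ lowSet hn ↔ (x : ℕ) < n :=
  ⟨fun hx => by obtain ⟨j, -, rfl⟩ := mem_map.1 hx; exact j.2,
    fun hx => mem_map.2 ⟨⟨x, hx⟩, mem_univ _, rfl⟩⟩

lemma card_lowSet (hn : n ≤ N) : (lowSet hn).card = n := by
  simp [lowSet]

lemma vSign_lowSet (hn : n ≤ N) : vSign n (lowSet hn) = 1 := by
  have hsum : ∑ i ∈ lowSet hn, ((i : ℕ) + 1) = ∑ i ∈ range (n + 1), i := by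
    rw [lowSet, sum_map, sum_range_succ', add_zero]
    exact Fin.sum_univ_eq_sum_range (· + 1) n
  have hgauss : (∑ i ∈ range (n + 1), i) * 2 = n * (n + 1) := by
    rw [sum_range_id_mul_two, Nat.add_sub_cancel, Nat.mul_comm]
  rw [vSign, hsum]
  exact Even.neg_one_pow ⟨∑ i ∈ range (n + 1), i, by omega⟩

/-- `shuffleEquiv (lowSet hn)` serves as the reference identification
`Fin n ⊕ Fin (N - n) ≃ Fin N`; it is `finSumFinEquiv` up to a cast, but the argument never needs this. -/
def shufflePerm (hn : n ≤ N) (I : Finset (Fin N)) (hI : I.card = n) : Perm (Fin N) :=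
  (shuffleEquiv (lowSet hn) (card_lowSet hn)).symm.trans (shuffleEquiv I hI)

end Shuffle

section AdjacentSwap

variable {N : ℕ} {a b : Fin N}

lemma swap_lt_swap_of_adjacent (hab : (b : ℕ) = a + 1) {x y : Fin N} (hxy : x < y)
    (hxy' : ¬(x = a ∧ y = b)) : swap a b x < swap a b y := by
  rw [Fin.lt_def] at hxy ⊢
  simp only [Fin.ext_iff] at hxy'
  rw [swap_apply_def, swap_apply_def]
  split_ifs <;> simp only [Fin.ext_iff] at * <;> omega

lemma orderEmbOfFin_eq_swap_apply (hab : (b : ℕ) = a + 1) {m : ℕ} {S T : Finset (Fin N)}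
    (hT : ¬(a ∈ T ∧ b ∈ T)) (hTS : ∀ x ∈ T, swap a b x ∈ S) (hS : S.card = m)
    (hT' : T.card = m) (j : Fin m) :
    S.orderEmbOfFin hS j = swap a b (T.orderEmbOfFin hT' j) := by
  refine (congrFun (orderEmbOfFin_unique hS (fun j => hTS _ (orderEmbOfFin_mem T hT' j))
    fun j k hjk => swap_lt_swap_of_adjacent hab ((T.orderEmbOfFin hT').strictMono hjk) ?_) j).symm
  rintro ⟨hja, hkb⟩
  exact hT ⟨hja ▸ orderEmbOfFin_mem T hT' j, hkb ▸ orderEmbOfFin_mem T hT' k⟩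

lemma sum_map_swap_add {M : Type*} [AddCommMonoid M] (f : Fin N → M) {I : Finset (Fin N)}
    (ha : a ∉ I) (hb : b ∈ I) :
    (∑ i ∈ I.map (swap a b).toEmbedding, f i) + f b = (∑ i ∈ I, f i) + f a := by
  have hfix : ∀ i ∈ I.erase b, f (swap a b i) = f i := fun i hi =>
    congrArg f (swap_apply_of_ne_of_ne (fun h => ha (h ▸ mem_of_mem_erase hi)) (ne_of_mem_erase hi))
  rw [sum_map, ← add_sum_erase I _ hb, ← add_sum_erase I _ hb]
  simp only [Equiv.coe_toEmbedding, swap_apply_right, sum_congr rfl hfix]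
  abel

end AdjacentSwap

section ShuffleSign

variable {N n : ℕ}

lemma exists_adjacent_of_ne_lowSet (hn : n ≤ N) {I : Finset (Fin N)} (hI : I.card = n)
    (hne : I ≠ lowSet hn) : ∃ a b : Fin N, (b : ℕ) = a + 1 ∧ a ∉ I ∧ b ∈ I := by
  obtain ⟨b, hbI, hnb⟩ : ∃ b ∈ I, n ≤ (b : ℕ) := by
    by_contra! hlow
    refine hne (eq_of_subset_of_card_le (fun x hx => (mem_lowSet hn).2 (hlow x hx)) ?_)
    rw [hI, card_lowSet]
  have hgap : (Iic b \ I).Nonempty := by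
    rw [sdiff_nonempty]
    intro hsub
    have := card_le_card hsub
    rw [Fin.card_Iic, hI] at this
    omega
  obtain ⟨a, ha, ha_max⟩ : ∃ a ∈ Iic b \ I, ∀ y ∈ Iic b \ I, y ≤ a :=
    ⟨_, max'_mem _ hgap, fun y hy => le_max' _ y hy⟩
  obtain ⟨hab_le, haI⟩ := mem_sdiff.1 ha
  rw [mem_Iic, Fin.le_def] at hab_le
  have hlt : (a : ℕ) < b := lt_of_le_of_ne hab_le fun h => haI (by rwa [Fin.ext h])
  refine ⟨a, ⟨a + 1, by omega⟩, rfl, haI, ?_⟩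
  by_contra hnot
  have := ha_max ⟨a + 1, by omega⟩ (by simpa [Fin.le_def] using ⟨hlt, hnot⟩)
  exact absurd (Fin.le_def.1 this) (Nat.not_succ_le_self _)

lemma shufflePerm_eq_swap_mul (hn : n ≤ N) {I : Finset (Fin N)} (hI : I.card = n)
    {a b : Fin N} (hab : (b : ℕ) = a + 1) (ha : a ∉ I) (hb : b ∈ I)
    (hI' : (I.map (swap a b).toEmbedding).card = n) :
    shufflePerm hn I hI = swap a b * shufflePerm hn _ hI' := by
  have hmem : ∀ x, x ∈ I.map (swap a b).toEmbedding ↔ swap a b x ∈ I := fun x => by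
    simp
  have hshuffle : ∀ z, shuffleEquiv I hI z = swap a b (shuffleEquiv _ hI' z) := by
    rintro (j | j)
    · refine orderEmbOfFin_eq_swap_apply hab (fun h => ha ?_) (fun x hx => (hmem x).1 hx) hI hI' j
      simpa using (hmem b).1 h.2
    · refine orderEmbOfFin_eq_swap_apply hab (fun h => ?_) (fun x hx => ?_)
        (card_compl_eq_sub hI) (card_compl_eq_sub hI') j
      · exact (by simpa [hmem] using h.1 : b ∉ I) hb
      · simpa [hmem] using hx
  ext x
  simp [shufflePerm, hshuffle]

theorem sign_shufflePerm (hn : n ≤ N) (I : Finset (Fin N)) (hI : I.card = n) :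
    (Perm.sign (shufflePerm hn I hI) : ℤ) = vSign n I := by
  induction hsum : ∑ i ∈ I, (i : ℕ) using Nat.strong_induction_on generalizing I with
  | _ t ih =>
  by_cases hlow : I = lowSet hn
  · subst hlow
    simp [shufflePerm, vSign_lowSet]
  obtain ⟨a, b, hab, ha, hb⟩ := exists_adjacent_of_ne_lowSet hn hI hlow
  have hI' : (I.map (swap a b).toEmbedding).card = n := by rw [card_map, hI]
  have hval := sum_map_swap_add (fun i : Fin N => (i : ℕ)) ha hb
  have hval1 := sum_map_swap_add (fun i : Fin N => (i : ℕ) + 1) ha hb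
  rw [shufflePerm_eq_swap_mul hn hI hab ha hb hI', Perm.sign_mul, Perm.sign_swap (by omega : a ≠ b),
    Units.val_mul, Units.val_neg, Units.val_one, ih _ (by omega) _ hI' rfl, vSign, vSign]
  rw [show ∑ i ∈ I, ((i : ℕ) + 1) = ∑ i ∈ I.map (swap a b).toEmbedding, ((i : ℕ) + 1) + 1 by
    omega]
  ring

end ShuffleSign

section Laplace

variable {N n : ℕ}

def blockPerm (hn : n ≤ N) (I : Finset (Fin N)) (hI : I.card = n) (σ : Perm (Fin n))
    (τ : Perm (Fin (N - n))) : Perm (Fin N) :=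
  shufflePerm hn I hI * (shuffleEquiv (lowSet hn) (card_lowSet hn)).permCongr (σ.sumCongr τ)

lemma blockPerm_shuffleEquiv_lowSet (hn : n ≤ N) (I : Finset (Fin N)) (hI : I.card = n)
    (σ : Perm (Fin n)) (τ : Perm (Fin (N - n))) (z : Fin n ⊕ Fin (N - n)) :
    blockPerm hn I hI σ τ (shuffleEquiv (lowSet hn) (card_lowSet hn) z) =
      shuffleEquiv I hI (σ.sumCongr τ z) := by
  simp [blockPerm, shufflePerm, permCongr_apply]

lemma sign_blockPerm (hn : n ≤ N) (I : Finset (Fin N)) (hI : I.card = n)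
    (σ : Perm (Fin n)) (τ : Perm (Fin (N - n))) :
    (Perm.sign (blockPerm hn I hI σ τ) : ℤ) = vSign n I * Perm.sign σ * Perm.sign τ := by
  rw [blockPerm, Perm.sign_mul, Perm.sign_permCongr, Perm.sign_sumCongr, Units.val_mul,
    Units.val_mul, sign_shufflePerm, mul_assoc]

lemma blockPerm_injective (hn : n ≤ N) :
    Function.Injective fun p : {I : Finset (Fin N) // I.card = n} × Perm (Fin n) ×
      Perm (Fin (N - n)) => blockPerm hn p.1.1 p.1.2 p.2.1 p.2.2 := by
  rintro ⟨⟨I, hI⟩, σ, τ⟩ ⟨⟨I', hI'⟩, σ', τ'⟩ h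
  have happ : ∀ z, shuffleEquiv I hI (σ.sumCongr τ z) = shuffleEquiv I' hI' (σ'.sumCongr τ' z) :=
    fun z => by
      rw [← blockPerm_shuffleEquiv_lowSet, ← blockPerm_shuffleEquiv_lowSet]
      exact congrFun (congrArg DFunLike.coe h) _
  have hII' : ∀ {I I' : Finset (Fin N)} (hI : I.card = n) (hI' : I'.card = n) {σ σ' : Perm (Fin n)},
      (∀ j, I.orderEmbOfFin hI (σ j) = I'.orderEmbOfFin hI' (σ' j)) → I ⊆ I' := by
    intro I I' hI hI' σ σ' hσ x hx
    obtain ⟨j, rfl⟩ : x ∈ Set.range (I.orderEmbOfFin hI) := by rwa [range_orderEmbOfFin]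
    rw [← σ.apply_symm_apply j, hσ]
    exact orderEmbOfFin_mem _ _ _
  have hinl : ∀ j, I.orderEmbOfFin hI (σ j) = I'.orderEmbOfFin hI' (σ' j) := by
    simpa using fun j => happ (Sum.inl j)
  obtain rfl : I = I' :=
    (hII' hI hI' hinl).antisymm (hII' hI' hI fun j => (hinl j).symm)
  have hστ : σ.sumCongr τ = σ'.sumCongr τ' :=
    Equiv.ext fun z => (shuffleEquiv I hI).injective (happ z)
  obtain ⟨rfl, rfl⟩ := Prod.ext_iff.1 (Perm.sumCongrHom_injective
    (show Perm.sumCongrHom _ _ (σ, τ) = Perm.sumCongrHom _ _ (σ', τ') from hστ))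
  rfl

lemma blockPerm_bijective (hn : n ≤ N) :
    Function.Bijective fun p : {I : Finset (Fin N) // I.card = n} × Perm (Fin n) ×
      Perm (Fin (N - n)) => blockPerm hn p.1.1 p.1.2 p.2.1 p.2.2 := by
  rw [Fintype.bijective_iff_injective_and_card]
  refine ⟨blockPerm_injective hn, ?_⟩
  simp only [Fintype.card_prod, Fintype.card_finset_len, Fintype.card_perm, Fintype.card_fin]
  rw [← Nat.choose_mul_factorial_mul_factorial hn, mul_assoc]

/-- Generalized Laplace expansion along the first `n` columns. -/
theorem det_submatrix_eq_sum_vSign_mul {R : Type*} [CommRing R] (hn : n ≤ N)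
    (B : Matrix (Fin N) (Fin n ⊕ Fin (N - n)) R) :
    (B.submatrix id (shuffleEquiv (lowSet hn) (card_lowSet hn)).symm).det =
      ∑ I : {I : Finset (Fin N) // I.card = n}, (vSign n I.1 : R) *
        (B.submatrix (I.1.orderEmbOfFin I.2) Sum.inl).det *
          (B.submatrix (I.1ᶜ.orderEmbOfFin (card_compl_eq_sub I.2)) Sum.inr).det := by
  have hterm : ∀ (I : {I : Finset (Fin N) // I.card = n}) σ τ,
      (Perm.sign (blockPerm hn I.1 I.2 σ τ) : R) *
          ∏ c, B (blockPerm hn I.1 I.2 σ τ c) ((shuffleEquiv (lowSet hn) (card_lowSet hn)).symm c) =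
        (vSign n I.1 : R) *
          ((Perm.sign σ : R) * ∏ j, B (I.1.orderEmbOfFin I.2 (σ j)) (Sum.inl j)) *
          ((Perm.sign τ : R) *
            ∏ j, B (I.1ᶜ.orderEmbOfFin (card_compl_eq_sub I.2) (τ j)) (Sum.inr j)) := by
    intro I σ τ
    have hsign := congrArg (Int.cast : ℤ → R) (sign_blockPerm hn I.1 I.2 σ τ)
    push_cast at hsign
    rw [hsign, ← (shuffleEquiv (lowSet hn) (card_lowSet hn)).prod_comp]
    simp only [blockPerm_shuffleEquiv_lowSet, Equiv.symm_apply_apply, Fintype.prod_sum_type,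
      Perm.sumCongr_apply, Sum.map_inl, Sum.map_inr, shuffleEquiv_inl, shuffleEquiv_inr]
    ring
  rw [Matrix.det_apply']
  simp only [Matrix.submatrix_apply, id]
  rw [← Fintype.sum_bijective _ (blockPerm_bijective hn) _ _ fun _ => rfl,
    Fintype.sum_prod_type]
  refine sum_congr rfl fun I _ => ?_
  simp only [Matrix.det_apply', Matrix.submatrix_apply, mul_sum, sum_mul, Fintype.sum_prod_type,
    hterm]
  exact sum_comm

end Laplace

lemma minor_eq_det {R : Type*} [CommRing R] {N M k : ℕ} (A : Matrix (Fin N) (Fin M) R)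
    {I : Finset (Fin N)} {J : Finset (Fin M)} (hI : I.card = k) (hJ : J.card = k) :
    minor A I J = (A.submatrix (I.orderEmbOfFin hI) (J.orderEmbOfFin hJ)).det := by
  subst hI
  rw [minor, dif_pos hJ]

lemma minor_eq_zero_of_card_ne {R : Type*} [CommRing R] {N M : ℕ} (A : Matrix (Fin N) (Fin M) R)
    {I : Finset (Fin N)} {J : Finset (Fin M)} (h : J.card ≠ I.card) : minor A I J = 0 :=
  dif_neg h

theorem sum_minor_mul_vSign_mul_minor_eq_zero {R : Type*} [CommRing R] {N M : ℕ} (n : ℕ)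
    (A : Matrix (Fin N) (Fin M) R) {J K : Finset (Fin M)} {x : Fin M} (hxJ : x ∈ J)
    (hxK : x ∈ K) :
    ∑ I : {I : Finset (Fin N) // I.card = n},
      minor A I.1 J * ((vSign n I.1 : R) * minor A I.1ᶜ K) = 0 := by
  obtain hn | hn := le_or_gt n N
  swap
  · refine sum_eq_zero fun I _ => absurd I.2 (ne_of_lt ?_)
    simpa using (card_le_univ I.1).trans_lt (by simpa using hn)
  by_cases hJ : J.card = n
  swap
  · refine sum_eq_zero fun I _ => ?_
    rw [minor_eq_zero_of_card_ne A (by rwa [I.2]), zero_mul]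
  by_cases hK : K.card = N - n
  swap
  · refine sum_eq_zero fun I _ => ?_
    rw [minor_eq_zero_of_card_ne A (I := I.1ᶜ) (by rwa [card_compl_eq_sub I.2]), mul_zero,
      mul_zero]
  set e := shuffleEquiv (lowSet hn) (card_lowSet hn)
  let B : Matrix (Fin N) (Fin n ⊕ Fin (N - n)) R :=
    Matrix.of fun r c => A r (Sum.elim (J.orderEmbOfFin hJ) (K.orderEmbOfFin hK) c)
  obtain ⟨j, rfl⟩ : x ∈ Set.range (J.orderEmbOfFin hJ) := by rwa [range_orderEmbOfFin]
  obtain ⟨k, hk⟩ : J.orderEmbOfFin hJ j ∈ Set.range (K.orderEmbOfFin hK) := by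
    rwa [range_orderEmbOfFin]
  have hdet : (B.submatrix id e.symm).det = 0 := by
    refine Matrix.det_zero_of_column_eq (i := e (Sum.inl j)) (j := e (Sum.inr k))
      (e.injective.ne Sum.inl_ne_inr) fun r => ?_
    simp [B, hk]
  rw [← hdet, det_submatrix_eq_sum_vSign_mul]
  refine sum_congr rfl fun I _ => ?_
  rw [minor_eq_det A I.2 hJ, minor_eq_det A (card_compl_eq_sub I.2) hK, mul_left_comm,
    ← mul_assoc]
  rfl

lemma innerVV_eq_zero_of_mem {R : Type*} [CommRing R] {s n : ℕ}
    (A : Matrix (Fin (s + n - 1)) (Fin (s * n)) R) {J K : Finset (Fin (s * n))}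
    {x : Fin (s * n)} (hxJ : x ∈ J) (hxK : x ∈ K) : innerVV A J K = 0 :=
  sum_minor_mul_vSign_mul_minor_eq_zero n A hxJ hxK

section Blocks

variable {s n : ℕ}

lemma finProdFinEquiv_val_div (p : Fin s × Fin n) : (finProdFinEquiv p : ℕ) / n = p.1 := by
  rw [finProdFinEquiv_apply_val, Nat.add_mul_div_left _ _ p.2.pos, Nat.div_eq_of_lt p.2.2,
    zero_add]

lemma finProdFinEquiv_val_mod (p : Fin s × Fin n) : (finProdFinEquiv p : ℕ) % n = p.2 := by
  rw [finProdFinEquiv_apply_val, Nat.add_mul_mod_self_left, Nat.mod_eq_of_lt p.2.2]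

lemma finProdFinEquiv_mem_iotaSet_iff (μ : Fin s → ℕ) (p : Fin s × Fin n) :
    finProdFinEquiv p ∈ iotaSet s n μ ↔ (p.2 : ℕ) < μ p.1 := by
  simp only [iotaSet, mem_filter, mem_univ, true_and, finProdFinEquiv_val_div,
    finProdFinEquiv_val_mod, dif_pos p.1.2]

lemma finProdFinEquiv_mem_phiSet_iff (k : Fin s) (μ : Fin s → ℕ) (p : Fin s × Fin n) :
    finProdFinEquiv p ∈ phiSet s n k μ ↔ p.1 ≠ k ∧ (p.2 : ℕ) = μ p.1 := by
  simp only [phiSet, mem_filter, mem_univ, true_and, finProdFinEquiv_val_div,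
    finProdFinEquiv_val_mod, dif_pos p.1.2, ne_eq, Fin.val_inj]

lemma finProdFinEquiv_mem_specialSet {k0 l : Fin s} {p : Fin s × Fin n} (hp : (p.2 : ℕ) = 0)
    (hk0 : p.1 ≠ k0) (hl : p.1 ≠ l) : finProdFinEquiv p ∈ specialSet s n k0 l := by
  simp only [specialSet, mem_filter, mem_univ, true_and, finProdFinEquiv_val_div,
    finProdFinEquiv_val_mod, ne_eq, Fin.val_inj]
  exact Or.inl ⟨hp, hk0, hl⟩

end Blocks

theorem inner_vanish_modified_general (s n : ℕ) (k0 : Fin s)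
    {R : Type*} [CommRing R] (A : Matrix (Fin (s + n - 1)) (Fin (s * n)) R)
    (Φ : (Fin s → ℕ) → Finset (Fin (s * n)))
    (hΦa : ∀ μ ∈ Finset.Nat.antidiagonalTuple s n,
      (¬ ∃ l : Fin s, l ≠ k0 ∧ μ = fun i => if i = l then n else 0) →
      Φ μ = phiSet s n k0 μ)
    (hΦb : ∀ l : Fin s, l ≠ k0 →
      Φ (fun i => if i = l then n else 0) = specialSet s n k0 l) :
    ∀ lam ∈ Finset.Nat.antidiagonalTuple s n,
    ∀ μ ∈ Finset.Nat.antidiagonalTuple s n,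
      (¬ ∀ i : Fin s, i ≠ k0 → lam i ≤ μ i) →
      innerVV A (iotaSet s n lam) (Φ μ) = 0 := by
  intro lam hlam μ hμ hle
  obtain ⟨i, hik0, hlt⟩ : ∃ i, i ≠ k0 ∧ μ i < lam i := by simpa using hle
  have hlam_le : lam i ≤ n := by
    rw [← Finset.Nat.mem_antidiagonalTuple.1 hlam]
    exact single_le_sum (fun j _ => Nat.zero_le (lam j)) (mem_univ i)
  refine innerVV_eq_zero_of_mem A (x := finProdFinEquiv (i, ⟨μ i, hlt.trans_le hlam_le⟩))
    ((finProdFinEquiv_mem_iotaSet_iff lam _).2 hlt) ?_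
  by_cases hspecial : ∃ l : Fin s, l ≠ k0 ∧ μ = fun j => if j = l then n else 0
  · obtain ⟨l, hlk0, rfl⟩ := hspecial
    have hil : i ≠ l := by rintro rfl; simp at hlt; omega
    rw [hΦb l hlk0]
    exact finProdFinEquiv_mem_specialSet (by simp [hil]) hik0 hil
  · rw [hΦa μ hμ hspecial]
    exact (finProdFinEquiv_mem_phiSet_iff k0 μ _).2 ⟨hik0, rfl⟩

/-- with `Φ = φ^{(k0)}` except on `R^{(k0)} = {μ_0^{(l)} : l ≠ k0}`
where `Φ(μ_0^{(l)})` is the special set above, one has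
`⟨V_{ι(λ)}(A), V̄_{Φ(μ)}(A)⟩ = 0` unless `λ ⪯_{k0} μ`. -/
theorem inner_vanish_modified (s n : ℕ) (hs : 0 < s) (hn : 2 ≤ n) (k0 : Fin s)
    {R : Type*} [CommRing R] (A : Matrix (Fin (s + n - 1)) (Fin (s * n)) R)
    (Φ : (Fin s → ℕ) → Finset (Fin (s * n)))
    (hΦa : ∀ μ ∈ Finset.Nat.antidiagonalTuple s n,
      (¬ ∃ l : Fin s, l ≠ k0 ∧ μ = fun i => if i = l then n else 0) →
      Φ μ = phiSet s n k0 μ)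
    (hΦb : ∀ l : Fin s, l ≠ k0 →
      Φ (fun i => if i = l then n else 0) = specialSet s n k0 l) :
    ∀ lam ∈ Finset.Nat.antidiagonalTuple s n,
    ∀ μ ∈ Finset.Nat.antidiagonalTuple s n,
      (¬ ∀ i : Fin s, i ≠ k0 → lam i ≤ μ i) →
      innerVV A (iotaSet s n lam) (Φ μ) = 0 :=
  inner_vanish_modified_general s n k0 A Φ hΦa hΦb
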